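/- Let s_1,…,s_{n+m} be pairwise distinct reals and let s_(1) > ⋯ > s_(n) denote the decreasingly ordered calibration values s_1,…,s_n. If ℓ ∈ {1,…,n+1}, i ∈ {1,…,m}, p_i = ℓ/(n+1) and σ(k̂_SL) = i, then there is no index j ∈ {1,…,m}∖{i} with s_(ℓ) < s_{n+j} < s_{n+i} (where s_(n+1) is interpreted as −∞ when ℓ = n+1). -/

import Mathlib

open MeasureTheory Finset

noncomputable section

attribute [local instance] Classical.propDecidable

/-- The conformal p-value of test point `i` (scores are `s 1, …, s (n+m)`,
calibration scores are `s 1, …, s n`, the `i`-th test score is `s (n+i)`). -/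
def pval (n : ℕ) (s : ℕ → ℝ) (i : ℕ) : ℝ :=
  (1 + (((Finset.Icc 1 n)).filter (fun j => s (n + i) ≤ s j)).card) / (n + 1)

/-- The p-value attached to the `k`-th largest test score, with the convention
`pOrd … 0 = 0`. -/
def pOrd (n : ℕ) (s : ℕ → ℝ) (σ : ℕ → ℕ) (k : ℕ) : ℝ :=
  if k = 0 then 0 else pval n s (σ k)

/-- The largest element of `argmin_{k ∈ {0,…,m}} f k`. -/
def maxArgmin (m : ℕ) (f : ℕ → ℝ) : ℕ :=
  sSup {k | k ≤ m ∧ ∀ k' ≤ m, f k ≤ f k'}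

/-- The largest element of the argmin of `f` over `{k ∈ {0,…,m} | P k}`. -/
def maxArgminOn (m : ℕ) (P : ℕ → Prop) (f : ℕ → ℝ) : ℕ :=
  sSup {k | k ≤ m ∧ P k ∧ ∀ k' ≤ m, P k' → f k ≤ f k'}

/-- The SL (support line) index `k̂_SL` at level `α`. -/
def khatSL (n m : ℕ) (α : ℝ) (s : ℕ → ℝ) (σ : ℕ → ℕ) : ℕ :=
  maxArgmin m (fun k => pOrd n s σ k - α * k / m)

/-- The SLC (support line conformal) index `k̂_SLC` at level `α`. -/
def khatSLC (n m : ℕ) (α : ℝ) (s : ℕ → ℝ) (σ : ℕ → ℕ) : ℕ :=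
  maxArgmin m (fun k => pOrd n s σ k - k * max (α / m - 1 / (n + 1)) 0)

/-- `σ` is the permutation of `{1,…,m}` ordering the test scores decreasingly,
with the convention `σ 0 = 0`. -/
def SortsTest (n m : ℕ) (s : ℕ → ℝ) (σ : ℕ → ℕ) : Prop :=
  σ 0 = 0 ∧ Set.BijOn σ (Finset.Icc 1 m) (Finset.Icc 1 m) ∧
    ∀ k ∈ Finset.Icc 1 m, ∀ k' ∈ Finset.Icc 1 m, k < k' → s (n + σ k') < s (n + σ k)

/-- `σ'` enumerates the subsample `A ⊆ {1,…,m}` so that the corresponding test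
scores are decreasing, with the convention `σ' 0 = 0`. -/
def SortsSub (n : ℕ) (s : ℕ → ℝ) (A : Finset ℕ) (σ' : ℕ → ℕ) : Prop :=
  σ' 0 = 0 ∧ Set.BijOn σ' (Finset.Icc 1 A.card) ↑A ∧
    ∀ k ∈ Finset.Icc 1 A.card, ∀ k' ∈ Finset.Icc 1 A.card, k < k' →
      s (n + σ' k') < s (n + σ' k)

/-- The indices of the calibration scores together with the indices of the
null test scores. -/
def NullIdx (n : ℕ) (H0 : Finset ℕ) : Finset ℕ :=
  Finset.Icc 1 n ∪ H0.image (fun i => n + i)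

/-- Assumption (A1), first part: the joint law of the scores is invariant under any
permutation of the coordinates indexed by `{1,…,n} ∪ {n+i : i ∈ H0}` fixing all the
other coordinates. -/
def ExchangeableNulls {Ω : Type*} [MeasurableSpace Ω] (μ : Measure Ω)
    (n : ℕ) (H0 : Finset ℕ) (S : Ω → ℕ → ℝ) : Prop :=
  ∀ e : Equiv.Perm ℕ, (∀ j ∉ NullIdx n H0, e j = j) →
    Measure.map (fun ω => fun j => S ω (e j)) μ = Measure.map S μ

/-- The event `Ω_i`: the largest test score other than `S_{n+i}` is at least the
maximum of the calibration scores and of `S_{n+i}`. -/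
def OmegaEvent {Ω : Type*} (n m : ℕ) (S : Ω → ℕ → ℝ) (i : ℕ) : Set Ω :=
  {ω | ∃ j ∈ (Finset.Icc 1 m).erase i,
    ∀ l ∈ Finset.Icc 1 n ∪ {n + i}, S ω l ≤ S ω (n + j)}

/-- The Storey estimator `π̂₀` with parameter `s0`. -/
def storey (n m s0 : ℕ) (s : ℕ → ℝ) : ℝ :=
  (1 + (((Finset.Icc 1 m)).filter
      (fun i => ((s0 : ℝ) + 1) / (n + 1) ≤ pval n s i)).card) /
    (m * (1 - ((s0 : ℝ) + 1) / (n + 1)))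

/-- The adaptive SL index `k̂_ASL` at level `α` with Storey parameter `s0`. -/
def khatASL (n m s0 : ℕ) (α : ℝ) (s : ℕ → ℝ) (σ : ℕ → ℕ) : ℕ :=
  maxArgminOn m (fun k => pOrd n s σ k ≤ (s0 : ℝ) / (n + 1))
    (fun k => pOrd n s σ k - α * k / (m * storey n m s0 s))

/-- The adaptive SLC index `k̂_ASLC` at level `α` with Storey parameter `s0`. -/
def khatASLC (n m s0 : ℕ) (α : ℝ) (s : ℕ → ℝ) (σ : ℕ → ℕ) : ℕ :=
  maxArgmin m (fun k =>
    pOrd n s σ k - k * max (α / (m * storey n m s0 s) - 1 / (n + 1)) 0)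

/-- The rejection set of the top-`k` procedure: all test points whose score is at
least the `k`-th largest one in the (sub)ordering `σ'` (empty if `k = 0`). -/
def rejSet (n m : ℕ) (s : ℕ → ℝ) (σ' : ℕ → ℕ) (k : ℕ) : Finset ℕ :=
  if k = 0 then ∅ else (Finset.Icc 1 m).filter (fun i => s (n + σ' k) ≤ s (n + i))

/-- Probability of drawing a given subsample, for the uniform distribution over
subsets of `{1,…,m}` of cardinality `t`. -/
def subProb (m t : ℕ) (A : Finset ℕ) : ENNReal :=
  if A ∈ (Finset.Icc 1 m).powersetCard t
    then (((Finset.Icc 1 m).powersetCard t).card : ENNReal)⁻¹ else 0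

/-- The `q`-th largest value among `v 0, …, v (B-1)`. -/
def kthLargest (B q : ℕ) (v : ℕ → ℕ) : ℕ :=
  sSup {t | q ≤ ((Finset.range B).filter (fun b => t ≤ v b)).card}

/-- The adaptive subsampled index: ASLC applied to a subsample of size `t`
(enumerated by `σ'`), where the Storey estimator is computed on the full test
sample of size `m`. -/
def khatASLCsub (n m t s0 : ℕ) (α : ℝ) (s : ℕ → ℝ) (σ' : ℕ → ℕ) : ℕ :=
  maxArgminOn t (fun k => pOrd n s σ' k ≤ (s0 : ℝ) / (n + 1))
    (fun k => pOrd n s σ' k - k * max (α / (storey n m s0 s * t) - 1 / (n + 1)) 0)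


lemma maxArgmin_mem (m : ℕ) (f : ℕ → ℝ) :
    maxArgmin m f ≤ m ∧ ∀ k' ≤ m, f (maxArgmin m f) ≤ f k' := by
  have hne : {k | k ≤ m ∧ ∀ k' ≤ m, f k ≤ f k'}.Nonempty := by
    obtain ⟨k, hk, hmin⟩ := Finset.exists_min_image (Finset.range (m + 1)) f ⟨0, by simp⟩
    exact ⟨k, Nat.lt_succ_iff.mp (Finset.mem_range.mp hk),
      fun k' hk' => hmin k' (Finset.mem_range.mpr (Nat.lt_succ_of_le hk'))⟩
  have hbdd : BddAbove {k | k ≤ m ∧ ∀ k' ≤ m, f k ≤ f k'} := ⟨m, fun k hk => hk.1⟩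
  exact Nat.sSup_mem hne hbdd

/-- Lemma B.1 of the paper: if `p_i = ℓ/(n+1)` and the last
SL rejection is test point `i`, then no other test score lies strictly between
the `ℓ`-th largest calibration score (interpreted as `−∞` when `ℓ = n+1`) and
`s_{n+i}`.  Here `e` enumerates the calibration scores decreasingly, so that
`s (e ℓ)` is the `ℓ`-th largest calibration score. -/
theorem no_testScore_between
    (n m : ℕ) (hn : 1 ≤ n) (hm : 1 ≤ m)
    (s : ℕ → ℝ) (hdist : Set.InjOn s (Finset.Icc 1 (n + m)))
    (σ : ℕ → ℕ) (hσ : SortsTest n m s σ)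
    (α : ℝ) (hα : α ∈ Set.Ioo (0 : ℝ) 1)
    (e : ℕ → ℕ) (he : Set.BijOn e (Finset.Icc 1 n) (Finset.Icc 1 n))
    (hesort : ∀ l ∈ Finset.Icc 1 n, ∀ l' ∈ Finset.Icc 1 n, l < l' → s (e l') < s (e l))
    (i : ℕ) (hi : i ∈ Finset.Icc 1 m)
    (ℓ : ℕ) (hℓ : ℓ ∈ Finset.Icc 1 (n + 1))
    (hp : pval n s i = (ℓ : ℝ) / (n + 1))
    (hσk : σ (khatSL n m α s σ) = i) :
    ∀ j ∈ Finset.Icc 1 m, j ≠ i →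
      ¬((ℓ ≤ n → s (e ℓ) < s (n + j)) ∧ s (n + j) < s (n + i)) := by
  rintro j hj hji ⟨hbetween, hlt⟩
  obtain ⟨hσ0, hσbij, hσsort⟩ := hσ
  obtain ⟨hℓ1, hℓn⟩ := Finset.mem_Icc.mp hℓ
  obtain ⟨hi1, him⟩ := Finset.mem_Icc.mp hi
  obtain ⟨hj1, hjm⟩ := Finset.mem_Icc.mp hj
  set T := (Finset.Icc 1 n).filter (fun l => s (n + i) ≤ s l) with hTdef
  set Tj := (Finset.Icc 1 n).filter (fun l => s (n + j) ≤ s l) with hTjdef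
  -- cardinality of T
  have hcardT : T.card + 1 = ℓ := by
    have h1 : ((1 : ℝ) + T.card) / (n + 1) = (ℓ : ℝ) / (n + 1) := hp
    have hpos : ((n : ℝ) + 1) ≠ 0 := by positivity
    have h2 : (1 : ℝ) + T.card = (ℓ : ℝ) := by
      field_simp at h1; linarith
    have h3 : ((T.card + 1 : ℕ) : ℝ) = (ℓ : ℝ) := by push_cast; linarith
    exact_mod_cast h3
  -- T ⊆ Tj
  have hTsub : T ⊆ Tj := by
    intro l hl
    rw [Finset.mem_filter] at hl ⊢
    exact ⟨hl.1, le_trans (le_of_lt hlt) hl.2⟩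
  -- Tj ⊆ T
  have hTjsub : Tj ⊆ T := by
    rcases Nat.lt_or_ge n ℓ with hcase | hcase
    · -- ℓ = n + 1, so T = Icc 1 n
      have hTeq : T = Finset.Icc 1 n := by
        apply Finset.eq_of_subset_of_card_le (Finset.filter_subset _ _)
        have : ℓ = n + 1 := le_antisymm hℓn hcase
        have : T.card = n := by omega
        simp [this, Nat.card_Icc]
        exact this.ge
      rw [hTeq]
      exact Finset.filter_subset _ _
    · -- ℓ ≤ n
      have heℓmem : e ℓ ∈ Finset.Icc 1 n := by
        have := he.mapsTo (by exact_mod_cast Finset.mem_Icc.mpr ⟨hℓ1, hcase⟩ :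
          ℓ ∈ (↑(Finset.Icc 1 n) : Set ℕ))
        exact_mod_cast this
      have heℓlt : s (e ℓ) < s (n + i) := by
        by_contra hcon
        push_neg at hcon
        have hne : s (e ℓ) ≠ s (n + i) := by
          intro heq
          have h1 : e ℓ ∈ (↑(Finset.Icc 1 (n + m)) : Set ℕ) := by
            have := Finset.mem_Icc.mp heℓmem
            exact_mod_cast Finset.mem_Icc.mpr ⟨this.1, le_trans this.2 (Nat.le_add_right _ _)⟩
          have h2 : n + i ∈ (↑(Finset.Icc 1 (n + m)) : Set ℕ) := by
            exact_mod_cast Finset.mem_Icc.mpr ⟨by omega, by omega⟩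
          have := hdist h1 h2 heq
          have := Finset.mem_Icc.mp heℓmem
          omega
        have hstrict : s (n + i) < s (e ℓ) := lt_of_le_of_ne hcon (Ne.symm hne)
        -- then e '' [1, ℓ] ⊆ T, contradiction with card
        have hsub : (Finset.Icc 1 ℓ).image e ⊆ T := by
          intro l hl
          obtain ⟨l'', hl''mem, hl''eq⟩ := Finset.mem_image.mp hl
          obtain ⟨h1, h2⟩ := Finset.mem_Icc.mp hl''mem
          have hl''n : l'' ∈ Finset.Icc 1 n := Finset.mem_Icc.mpr ⟨h1, le_trans h2 hcase⟩
          rw [hTdef, Finset.mem_filter]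
          refine ⟨by rw [← hl''eq]; exact_mod_cast he.mapsTo (by exact_mod_cast hl''n), ?_⟩
          rcases eq_or_lt_of_le h2 with heq | hlt2
          · rw [← hl''eq, heq]; exact le_of_lt hstrict
          · rw [← hl''eq]
            exact le_of_lt (lt_trans hstrict
              (hesort l'' hl''n ℓ (Finset.mem_Icc.mpr ⟨hℓ1, hcase⟩) hlt2))
        have hcard2 : ((Finset.Icc 1 ℓ).image e).card = ℓ := by
          rw [Finset.card_image_of_injOn, Nat.card_Icc]
          · omega
          · intro a ha b hb hab
            exact he.injOn
              (by
                have := Finset.mem_Icc.mp (by exact_mod_cast ha : a ∈ Finset.Icc 1 ℓ)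
                exact_mod_cast Finset.mem_Icc.mpr ⟨this.1, le_trans this.2 hcase⟩)
              (by
                have := Finset.mem_Icc.mp (by exact_mod_cast hb : b ∈ Finset.Icc 1 ℓ)
                exact_mod_cast Finset.mem_Icc.mpr ⟨this.1, le_trans this.2 hcase⟩)
              hab
        have := Finset.card_le_card hsub
        omega
      -- T = e '' [1, ℓ-1]
      have hTsubI : T ⊆ (Finset.Icc 1 (ℓ - 1)).image e := by
        intro l hl
        rw [hTdef, Finset.mem_filter] at hl
        obtain ⟨hlmem, hlge⟩ := hl
        obtain ⟨l'', hl''mem, hl''eq⟩ := he.surjOn (by exact_mod_cast hlmem :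
          l ∈ (↑(Finset.Icc 1 n) : Set ℕ))
        have hl''mem' : l'' ∈ Finset.Icc 1 n := by exact_mod_cast hl''mem
        have hl''lt : l'' < ℓ := by
          by_contra hcon
          push_neg at hcon
          rcases eq_or_lt_of_le hcon with heq | hlt2
          · rw [heq, hl''eq] at heℓlt; linarith
          · have := hesort ℓ (Finset.mem_Icc.mpr ⟨hℓ1, hcase⟩) l'' hl''mem' hlt2
            rw [hl''eq] at this; linarith
        exact Finset.mem_image.mpr ⟨l'', Finset.mem_Icc.mpr
          ⟨(Finset.mem_Icc.mp hl''mem').1, by omega⟩, hl''eq⟩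
      have hTeqI : T = (Finset.Icc 1 (ℓ - 1)).image e := by
        apply Finset.eq_of_subset_of_card_le hTsubI
        calc ((Finset.Icc 1 (ℓ - 1)).image e).card ≤ (Finset.Icc 1 (ℓ - 1)).card :=
              Finset.card_image_le
          _ = ℓ - 1 := by rw [Nat.card_Icc]; omega
          _ ≤ T.card := by omega
      -- now Tj ⊆ (image) = T
      intro l hl
      rw [hTjdef, Finset.mem_filter] at hl
      obtain ⟨hlmem, hlge⟩ := hl
      obtain ⟨l'', hl''mem, hl''eq⟩ := he.surjOn (by exact_mod_cast hlmem :
        l ∈ (↑(Finset.Icc 1 n) : Set ℕ))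
      have hl''mem' : l'' ∈ Finset.Icc 1 n := by exact_mod_cast hl''mem
      have hgtℓ : s (e ℓ) < s l := lt_of_lt_of_le (hbetween hcase) hlge
      have hl''lt : l'' < ℓ := by
        by_contra hcon
        push_neg at hcon
        rcases eq_or_lt_of_le hcon with heq | hlt2
        · rw [heq, hl''eq] at hgtℓ; linarith
        · have := hesort ℓ (Finset.mem_Icc.mpr ⟨hℓ1, hcase⟩) l'' hl''mem' hlt2
          rw [hl''eq] at this; linarith
      rw [hTeqI]
      exact Finset.mem_image.mpr ⟨l'', Finset.mem_Icc.mpr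
        ⟨(Finset.mem_Icc.mp hl''mem').1, by omega⟩, hl''eq⟩
  have hTeq : Tj = T := le_antisymm hTjsub hTsub
  have hpj : pval n s j = pval n s i := by
    unfold pval
    rw [show ((Finset.Icc 1 n).filter (fun l => s (n + j) ≤ s l)) = Tj from rfl,
      show ((Finset.Icc 1 n).filter (fun l => s (n + i) ≤ s l)) = T from rfl, hTeq]
  -- now the argmin argument
  set g : ℕ → ℝ := fun k => pOrd n s σ k - α * k / m with hgdef
  set k₀ := khatSL n m α s σ with hk₀def
  have hk₀ : k₀ ≤ m ∧ ∀ k' ≤ m, g k₀ ≤ g k' := maxArgmin_mem m g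
  have hk₀ne : k₀ ≠ 0 := by
    intro h
    rw [h, hσ0] at hσk
    omega
  -- find k' with σ k' = j
  obtain ⟨k', hk'mem, hk'eq⟩ := hσbij.surjOn (by exact_mod_cast hj :
    j ∈ (↑(Finset.Icc 1 m) : Set ℕ))
  have hk'mem' : k' ∈ Finset.Icc 1 m := by exact_mod_cast hk'mem
  have hk₀mem : k₀ ∈ Finset.Icc 1 m := Finset.mem_Icc.mpr ⟨Nat.one_le_iff_ne_zero.mpr hk₀ne, hk₀.1⟩
  have hk₀k' : k₀ < k' := by
    rcases lt_trichotomy k₀ k' with h | h | h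
    · exact h
    · exfalso; apply hji; rw [← hk'eq, ← h, hσk]
    · exfalso
      have := hσsort k' hk'mem' k₀ hk₀mem h
      rw [hσk, hk'eq] at this
      linarith
  have hk'ne : k' ≠ 0 := by
    have := (Finset.mem_Icc.mp hk'mem').1; omega
  have hgk₀ : g k₀ = pval n s i - α * k₀ / m := by
    simp only [hgdef, pOrd, if_neg hk₀ne, hσk]
  have hgk' : g k' = pval n s i - α * k' / m := by
    simp only [hgdef, pOrd, if_neg hk'ne, hk'eq, hpj]
  have hle : g k₀ ≤ g k' := hk₀.2 k' (Finset.mem_Icc.mp hk'mem').2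
  have hfrac : α * k₀ / m < α * k' / m := by
    have hm0 : (0 : ℝ) < m := by exact_mod_cast hm
    have : (k₀ : ℝ) < k' := by exact_mod_cast hk₀k'
    exact (div_lt_div_iff_of_pos_right hm0).mpr (mul_lt_mul_of_pos_left this hα.1)
  rw [hgk₀, hgk'] at hle
  linarith

end
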